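/- Let X be a normed space, F ⊆ X nonempty closed convex with 0 ∈ F, Q ⊆ X nonempty convex, and suppose x̄ ∈ Q − F_∞. Then ∂T_Q^F(x̄) = N(x̄; Q − F_∞) ∩ C*, where C* = {x* ∈ X* : sup_{f∈F} ⟨−x*, f⟩ ≤ 1}. -/

import Mathlib

open scoped ENNReal Pointwise

/-- The asymptotic cone of `F` at base point `x`. -/
def asympCone {X : Type*} [NormedAddCommGroup X] [NormedSpace ℝ X]
    (F : Set X) (x : X) : Set X :=
  {d | ∀ t : ℝ, 0 < t → x + t • d ∈ F}

/-- The minimal time function `T_Q^F`. -/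
noncomputable def minTime {X : Type*} [NormedAddCommGroup X] [NormedSpace ℝ X]
    (F Q : Set X) (x : X) : ℝ≥0∞ :=
  sInf (ENNReal.ofReal '' {t : ℝ | 0 ≤ t ∧ ∃ f ∈ F, x + t • f ∈ Q})

/-! Since `T_Q^F(x̄) = 0`, a subgradient at `x̄` is a functional `x*` with
`x*(x - x̄) ≤ T_Q^F(x)` for all `x`. Testing this at points of `Q - F_∞`, where `T_Q^F`
vanishes, gives the normal cone condition; testing it at `x̄ - f` with `f ∈ F`, where
`T_Q^F ≤ 1 + s` for every `s > 0` by convexity of `F`, gives `-x*(f) ≤ 1`. Conversely,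
if `x + t f ∈ Q` then `x + t f ∈ Q - F_∞`, so `x*(x - x̄) ≤ -t x*(f) ≤ t`. -/

section MinTime

variable {X : Type*} [NormedAddCommGroup X] [NormedSpace ℝ X] {F Q : Set X}

lemma zero_mem_asympCone (h0F : (0 : X) ∈ F) : (0 : X) ∈ asympCone F 0 :=
  fun t _ => by simpa using h0F

lemma minTime_le_ofReal {x f : X} {t : ℝ} (ht : 0 ≤ t) (hf : f ∈ F) (hxt : x + t • f ∈ Q) :
    minTime F Q x ≤ ENNReal.ofReal t :=
  sInf_le ⟨t, ⟨ht, f, hf, hxt⟩, rfl⟩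

lemma ofReal_le_minTime {x : X} {c : ℝ}
    (h : ∀ t, 0 ≤ t → ∀ f ∈ F, x + t • f ∈ Q → c ≤ t) :
    ENNReal.ofReal c ≤ minTime F Q x := by
  refine le_sInf ?_
  rintro _ ⟨t, ⟨ht, f, hf, hxt⟩, rfl⟩
  exact ENNReal.ofReal_le_ofReal (h t ht f hf hxt)

lemma minTime_eq_zero_of_mem_sub_asympCone {x : X} (hx : x ∈ Q - asympCone F 0) :
    minTime F Q x = 0 := by
  obtain ⟨q, hq, d, hd, rfl⟩ := hx
  refine le_antisymm (ENNReal.le_of_forall_pos_le_add fun ε hε _ => ?_) zero_le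
  have hε' : (0 : ℝ) < ε := hε
  have hdF : (ε : ℝ)⁻¹ • d ∈ F := by simpa using hd _ (inv_pos.2 hε')
  have hq' : q - d + (ε : ℝ) • ((ε : ℝ)⁻¹ • d) = q := by
    rw [smul_inv_smul₀ hε'.ne', sub_add_cancel]
  simpa using minTime_le_ofReal hε'.le hdF (hq'.symm ▸ hq)

lemma Convex.inv_one_add_smul_add_mem (hF : Convex ℝ F) {f d : X} (hf : f ∈ F)
    (hd : d ∈ asympCone F 0) {s : ℝ} (hs : 0 < s) : (1 + s)⁻¹ • (f + d) ∈ F := by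
  have hdF : s⁻¹ • d ∈ F := by simpa using hd _ (inv_pos.2 hs)
  have hcomb : (1 + s)⁻¹ • (f + d) = (1 + s)⁻¹ • f + (s / (1 + s)) • (s⁻¹ • d) := by
    rw [smul_add, smul_smul]
    congr 2
    field_simp
  rw [hcomb]
  exact hF hf hdF (by positivity) (by positivity) (by field_simp)

lemma minTime_sub_le_of_mem_sub_asympCone (hF : Convex ℝ F) {xbar f : X}
    (hxbar : xbar ∈ Q - asympCone F 0) (hf : f ∈ F) {s : ℝ} (hs : 0 < s) :
    minTime F Q (xbar - f) ≤ ENNReal.ofReal (1 + s) := by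
  obtain ⟨q, hq, d, hd, rfl⟩ := Set.mem_sub.1 hxbar
  have hs' : (1 + s) ≠ 0 := by positivity
  refine minTime_le_ofReal (by positivity) (hF.inv_one_add_smul_add_mem hf hd hs) ?_
  rw [smul_inv_smul₀ hs']
  convert hq using 1
  abel

end MinTime

theorem subdiff_minTime_at_mem_sub_general {X : Type*} [NormedAddCommGroup X] [NormedSpace ℝ X]
    (F : Set X) (hFconv : Convex ℝ F)
    (h0F : (0 : X) ∈ F)
    (Q : Set X)
    (xbar : X) (hxbar : xbar ∈ Q - asympCone F 0) :
    {x' : X →L[ℝ] ℝ | ∀ x : X,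
        ENNReal.ofReal (x' (x - xbar)) + minTime F Q xbar ≤ minTime F Q x} =
      {x' : X →L[ℝ] ℝ | ∀ x ∈ Q - asympCone F 0, x' (x - xbar) ≤ 0} ∩
      {x' : X →L[ℝ] ℝ | ∀ f ∈ F, (-x') f ≤ 1} := by
  ext x'
  simp only [Set.mem_ofPred_eq, Set.mem_inter_iff, minTime_eq_zero_of_mem_sub_asympCone hxbar,
    add_zero, neg_apply]
  constructor
  · intro h
    refine ⟨fun x hx => ?_, fun f hf => le_of_forall_pos_le_add fun s hs => ?_⟩
    · simpa [minTime_eq_zero_of_mem_sub_asympCone hx] using h x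
    · have hle := (h (xbar - f)).trans (minTime_sub_le_of_mem_sub_asympCone hFconv hxbar hf hs)
      rw [ENNReal.ofReal_le_ofReal_iff (by positivity)] at hle
      simpa [add_comm] using hle
  · rintro ⟨hN, hC⟩ x
    refine ofReal_le_minTime fun t ht f hf hxt => ?_
    have hQ := hN _ (Set.subset_sub_left (zero_mem_asympCone h0F) hxt)
    rw [show x + t • f - xbar = (x - xbar) + t • f by abel, map_add, map_smul, smul_eq_mul] at hQ
    nlinarith [mul_le_mul_of_nonneg_left (hC f hf) ht]

theorem subdiff_minTime_at_mem_sub {X : Type*} [NormedAddCommGroup X] [NormedSpace ℝ X]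
    (F : Set X) (hFne : F.Nonempty) (hFcl : IsClosed F) (hFconv : Convex ℝ F)
    (h0F : (0 : X) ∈ F)
    (Q : Set X) (hQne : Q.Nonempty) (hQconv : Convex ℝ Q)
    (xbar : X) (hxbar : xbar ∈ Q - asympCone F 0) :
    {x' : X →L[ℝ] ℝ | ∀ x : X,
        ENNReal.ofReal (x' (x - xbar)) + minTime F Q xbar ≤ minTime F Q x} =
      {x' : X →L[ℝ] ℝ | ∀ x ∈ Q - asympCone F 0, x' (x - xbar) ≤ 0} ∩
      {x' : X →L[ℝ] ℝ | ∀ f ∈ F, (-x') f ≤ 1} :=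
  subdiff_minTime_at_mem_sub_general F hFconv h0F Q xbar hxbar
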